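/- arXiv:1411.7723 — 3 statements merged into one kernel-verified Lean document; each statement's English description precedes it below -/
import Mathlib

section
/- Let T be a linear endomorphism of a finite-dimensional complex vector space V and let k be a positive integer. The generalized eigenspace of T^k for the eigenvalue 1 coincides with the generalized eigenspace of T for the eigenvalue 1 if and only if every eigenvalue μ of T with μ^k = 1 satisfies μ = 1. (Equivalently, k is an admissible iteration of T precisely when k is not divisible by the order of any root of unity occurring among the eigenvalues of T.) -/
/-!
Every generalized `μ`-eigenvector of `T` is a generalized `μ ^ k`-eigenvector of `T ^ k`, since
`X - μ` divides `X ^ k - μ ^ k`. So the generalized `1`-eigenspace `W` of `T ^ k` contains that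
of `T`. Being `T`-invariant, `W` is the sum of its intersections with the generalized eigenspaces
of `T`, and the intersection with the one for `μ` vanishes unless `μ ^ k = 1`, because generalized
eigenspaces of `T ^ k` for distinct eigenvalues are independent. Thus `W` is the generalized
`1`-eigenspace of `T` exactly when no eigenvalue `μ ≠ 1` of `T` satisfies `μ ^ k = 1`.
-/

open Polynomial

namespace Module.End

variable {R M : Type*} [CommRing R] [AddCommGroup M] [Module R M]

theorem maxGenEigenspace_le_maxGenEigenspace_pow (f : End R M) (k : ℕ) (μ : R) :
    f.maxGenEigenspace μ ≤ (f ^ k).maxGenEigenspace (μ ^ k) := by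
  intro x hx
  obtain ⟨m, hm⟩ := (mem_maxGenEigenspace _ _ _).mp hx
  obtain ⟨q, hq⟩ : X - C μ ∣ X ^ k - C (μ ^ k) := by
    simp [dvd_iff_isRoot]
  have hfactor : (f ^ k - μ ^ k • 1) ^ m = aeval f (q ^ m) * (f - μ • 1) ^ m := by
    simpa [Module.algebraMap_end_eq_smul_id, mul_pow, mul_comm, _root_.smul_pow, ← one_eq_id] using
      congr(aeval f ($hq ^ m))
  exact (mem_maxGenEigenspace _ _ _).mpr ⟨m, by rw [hfactor, mul_apply, hm, map_zero]⟩

theorem hasEigenvalue_iff_maxGenEigenspace_ne_bot {f : End R M} {μ : R} :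
    f.HasEigenvalue μ ↔ f.maxGenEigenspace μ ≠ ⊥ :=
  (hasUnifEigenvalue_iff_hasUnifEigenvalue_one (k := ⊤) (by simp)).symm

theorem disjoint_maxGenEigenspace_pow [IsDomain R] [Module.IsTorsionFree R M] (f : End R M)
    {k : ℕ} {μ ν : R} (h : μ ^ k ≠ ν) :
    Disjoint (f.maxGenEigenspace μ) ((f ^ k).maxGenEigenspace ν) :=
  ((f ^ k).disjoint_genEigenspace h ⊤ ⊤).mono_left
    (maxGenEigenspace_le_maxGenEigenspace_pow f k μ)

end Module.End

open Module.End

theorem admissible_iteration_iff_general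
    {V : Type*} [AddCommGroup V] [Module ℂ V] [FiniteDimensional ℂ V]
    (T : Module.End ℂ V) (k : ℕ) :
    (T ^ k).maxGenEigenspace 1 = T.maxGenEigenspace 1 ↔
      ∀ μ : ℂ, T.HasEigenvalue μ → μ ^ k = 1 → μ = 1 := by
  constructor
  · intro heq μ hμ hμk
    by_contra hμ1
    have hle : T.maxGenEigenspace μ ≤ T.maxGenEigenspace 1 := by
      simpa [hμk, heq] using maxGenEigenspace_le_maxGenEigenspace_pow T k μ
    exact hasEigenvalue_iff_maxGenEigenspace_ne_bot.mp hμ <|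
      disjoint_self.mp ((T.disjoint_genEigenspace hμ1 ⊤ ⊤).mono_right hle)
  · intro h
    set W := (T ^ k).maxGenEigenspace 1
    have hW : ∀ x ∈ W, T x ∈ W :=
      mapsTo_maxGenEigenspace_of_comm ((Commute.refl T).pow_left k) 1
    refine le_antisymm ?_ (by simpa using maxGenEigenspace_le_maxGenEigenspace_pow T k 1)
    rw [Submodule.eq_iSup_inf_genEigenspace ⊤ hW (iSup_maxGenEigenspace_eq_top T)]
    refine iSup_le fun μ ↦ ?_
    rcases eq_or_ne μ 1 with rfl | hμ1
    · exact inf_le_right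
    have hdisj : Disjoint (T.maxGenEigenspace μ) W := by
      by_cases hμk : μ ^ k = 1
      · have hbot : T.maxGenEigenspace μ = ⊥ := by
          by_contra hne
          exact hμ1 (h μ (hasEigenvalue_iff_maxGenEigenspace_ne_bot.mpr hne) hμk)
        simp [hbot]
      · exact disjoint_maxGenEigenspace_pow T hμk
    simp [hdisj.symm.eq_bot]

theorem admissible_iteration_iff
    {V : Type*} [AddCommGroup V] [Module ℂ V] [FiniteDimensional ℂ V]
    (T : Module.End ℂ V) (k : ℕ) (hk : 0 < k) :
    (T ^ k).maxGenEigenspace 1 = T.maxGenEigenspace 1 ↔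
      ∀ μ : ℂ, T.HasEigenvalue μ → μ ^ k = 1 → μ = 1 :=
  admissible_iteration_iff_general T k
end

section
/- Let T be a linear endomorphism of a finite-dimensional complex vector space V. Then all sufficiently large primes are admissible iterations of T: there exists N such that for every prime p ≥ N, the generalized eigenspace of T^p for the eigenvalue 1 coincides with the generalized eigenspace of T for the eigenvalue 1. -/
open Module Polynomial

lemma maxGenEigenspace_le_pow
    {V : Type*} [AddCommGroup V] [Module ℂ V]
    (T : Module.End ℂ V) (μ : ℂ) (n : ℕ) :
    T.maxGenEigenspace μ ≤ (T ^ n).maxGenEigenspace (μ ^ n) := by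
  intro x hx
  rw [Module.End.mem_maxGenEigenspace] at hx ⊢
  obtain ⟨k, hk⟩ := hx
  obtain ⟨q, hq⟩ : (X - C μ) ∣ (X ^ n - C (μ ^ n) : ℂ[X]) :=
    dvd_iff_isRoot.mpr (by simp [IsRoot])
  have hsub : T - μ • 1 = aeval T (X - C μ) := by
    simp [Module.algebraMap_end_eq_smul_id, Module.End.one_eq_id]
  have hc : Commute (aeval T q) (T - μ • 1) := by
    rw [hsub, commute_iff_eq, ← map_mul, ← map_mul, mul_comm]
  have key : T ^ n - (μ ^ n) • (1 : Module.End ℂ V)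
      = aeval T q * (T - μ • 1) := by
    have := congrArg (aeval T) hq
    simp only [map_sub, map_pow, map_mul, aeval_X, aeval_C,
      Module.algebraMap_end_eq_smul_id] at this
    rw [show (μ ^ n) • (1 : Module.End ℂ V) = (μ • LinearMap.id) ^ n by
      simp [_root_.smul_pow, ← Module.End.one_eq_id]]
    rw [this, show T - μ • LinearMap.id = T - μ • 1 from rfl]
    exact hc.eq.symm
  refine ⟨k, ?_⟩
  rw [key, hc.mul_pow, Module.End.mul_apply, hk, map_zero]

theorem large_primes_are_admissible_iterations
    {V : Type*} [AddCommGroup V] [Module ℂ V] [FiniteDimensional ℂ V]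
    (T : Module.End ℂ V) :
    ∃ N : ℕ, ∀ p : ℕ, p.Prime → N ≤ p →
      (T ^ p).maxGenEigenspace 1 = T.maxGenEigenspace 1 := by
  classical
  have hfin := T.finite_hasEigenvalue
  refine ⟨hfin.toFinset.sup orderOf + 1, fun p hp hNp => ?_⟩
  have hroot : ∀ μ : ℂ, T.HasEigenvalue μ → μ ≠ 1 → μ ^ p ≠ 1 := by
    intro μ hμ hμ1 hcon
    have h1 : orderOf μ ∣ p := orderOf_dvd_of_pow_eq_one hcon
    have h2 : orderOf μ ≠ 1 := by simpa [orderOf_eq_one_iff] using hμ1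
    have h0 : orderOf μ ≠ 0 := by
      intro h; rw [h] at h1; exact hp.ne_zero (Nat.eq_zero_of_zero_dvd h1)
    have h3 : orderOf μ = p := (hp.eq_one_or_self_of_dvd _ h1).resolve_left h2
    have hle : orderOf μ ≤ hfin.toFinset.sup orderOf :=
      Finset.le_sup (by simpa using hμ)
    omega
  apply le_antisymm
  · set W := (T ^ p).maxGenEigenspace 1 with hW
    have hinv : ∀ x ∈ W, T x ∈ W := fun x hx =>
      Module.End.mapsTo_maxGenEigenspace_of_comm ((Commute.refl T).pow_left p) 1 hx
    have hdec := Submodule.inf_iSup_genEigenspace (p := W) (f := T) hinv ⊤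
    have htop : ⨆ μ : ℂ, T.genEigenspace μ ⊤ = ⊤ := T.iSup_maxGenEigenspace_eq_top
    have : W = ⨆ μ : ℂ, W ⊓ T.genEigenspace μ ⊤ := by
      rw [← hdec, htop, inf_top_eq]
    rw [this]
    refine iSup_le fun μ => ?_
    by_cases hμ1 : μ = 1
    · subst hμ1; exact inf_le_right
    by_cases hev : T.HasEigenvalue μ
    · have hle := maxGenEigenspace_le_pow T μ p
      have hd : Disjoint ((T ^ p).maxGenEigenspace 1) ((T ^ p).maxGenEigenspace (μ ^ p)) :=
        Module.End.disjoint_genEigenspace _ (Ne.symm (hroot μ hev hμ1)) ⊤ ⊤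
      exact le_trans (le_trans (le_inf inf_le_left (inf_le_right.trans hle)) hd.le_bot) bot_le
    · have hbot : T.maxGenEigenspace μ = ⊥ := by
        by_contra h
        exact hev (Module.End.HasUnifEigenvalue.lt zero_lt_one h)
      rw [Module.End.maxGenEigenspace] at hbot
      rw [hbot, inf_bot_eq]
      exact bot_le
  · simpa using maxGenEigenspace_le_pow T 1 p
end

section
/- There exists a smooth vector field v : ℝ² → ℝ² which is ℤ²-periodic (v(x+m) = v(x) for all m ∈ ℤ²) and divergence-free (the trace of the derivative Dv(x) vanishes for all x), i.e., a symplectic vector field on the torus 𝕋² = ℝ²/ℤ², such that: (1) v has exactly one zero modulo ℤ², i.e., there is x₀ with v(x₀) = 0 and every zero of v is congruent to x₀ modulo ℤ²; and (2) the flow of v has no non-constant periodic orbits on 𝕋²: there is no non-constant solution x : ℝ → ℝ² of ẋ(t) = v(x(t)) with x(T) − x(0) ∈ ℤ² for some T > 0. -/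
noncomputable section

/-- The Euclidean plane `ℝ²`. -/
abbrev E2 := EuclideanSpace ℝ (Fin 2)

/-- A point of `ℝ²` lies in the lattice `ℤ²`. -/
def IsLat (m : E2) : Prop := ∀ i, ∃ k : ℤ, m i = (k : ℝ)

open Real

namespace SympTorus

def ff (s : ℝ) : ℝ := Real.sin (π * s) ^ 2
def ff' (s : ℝ) : ℝ := π * Real.sin (2 * π * s)
def GG (s : ℝ) : ℝ := s / 2 - Real.sin (2 * π * s) / (4 * π)

lemma hasDerivAt_ff (s : ℝ) : HasDerivAt ff (ff' s) s := by
  have h : HasDerivAt (fun s : ℝ => Real.sin (π * s) ^ 2)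
      (2 * Real.sin (π * s) ^ 1 * (Real.cos (π * s) * π)) s :=
    (((Real.hasDerivAt_sin (π*s)).comp s (by simpa using (hasDerivAt_id s).const_mul π))).pow 2
  convert h using 1
  · rfl
  rw [ff', show (2:ℝ)*π*s = 2*(π*s) by ring, Real.sin_two_mul]; ring

lemma hasDerivAt_GG (s : ℝ) : HasDerivAt GG (ff s) s := by
  have h1 : HasDerivAt (fun s : ℝ => s / 2) (1 / 2) s := by
    simpa using (hasDerivAt_id s).div_const 2
  have h2 : HasDerivAt (fun s : ℝ => Real.sin (2 * π * s) / (4 * π))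
      (Real.cos (2 * π * s) * (2 * π) / (4 * π)) s := by
    exact (((Real.hasDerivAt_sin (2*π*s)).comp s
      (by simpa using (hasDerivAt_id s).const_mul (2*π)))).div_const (4*π)
  have h := h1.sub h2
  convert h using 1
  iterate 3 rfl
  have hπ : (π : ℝ) ≠ 0 := Real.pi_ne_zero
  rw [ff, Real.sin_sq_eq_half_sub]
  field_simp
  ring_nf

lemma contDiff_ff : ContDiff ℝ (⊤ : ℕ∞) ff :=
  (Real.contDiff_sin.comp (contDiff_const.mul contDiff_id)).pow 2

lemma ff_nonneg (s : ℝ) : 0 ≤ ff s := sq_nonneg _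

lemma ff_eq_zero_iff (s : ℝ) : ff s = 0 ↔ ∃ k : ℤ, s = (k : ℝ) := by
  rw [ff, sq_eq_zero_iff, Real.sin_eq_zero_iff]
  constructor
  · rintro ⟨k, hk⟩
    refine ⟨k, ?_⟩
    have hπ : (π : ℝ) ≠ 0 := Real.pi_ne_zero
    have : π * (k : ℝ) = π * s := by linarith [hk]
    exact (mul_left_cancel₀ hπ this).symm
  · rintro ⟨k, rfl⟩
    exact ⟨k, by ring⟩

lemma ff_int_add (s : ℝ) (k : ℤ) : ff (s + k) = ff s := by
  rw [ff, ff, show π * (s + k) = π * s + k * π by ring, Real.sin_add_int_mul_pi, mul_pow]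
  have h1 : ((-1 : ℝ) ^ k) ^ 2 = 1 := by
    rw [sq, ← zpow_add₀ (by norm_num : (-1:ℝ) ≠ 0)]
    exact Even.neg_one_zpow ⟨k, rfl⟩
  rw [h1, one_mul]

lemma GG_int_add (s : ℝ) (k : ℤ) : GG (s + k) = GG s + k / 2 := by
  rw [GG, GG, show 2 * π * (s + k) = 2 * π * s + k * (2 * π) by ring,
    Real.sin_add_int_mul_two_pi]
  ring

lemma abs_ff'_le (s : ℝ) : |ff' s| ≤ π := by
  rw [ff', abs_mul, abs_of_pos Real.pi_pos]
  calc π * |Real.sin (2*π*s)| ≤ π * 1 := by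
        exact mul_le_mul_of_nonneg_left (Real.abs_sin_le_one _) Real.pi_pos.le
    _ = π := mul_one π

def vv : E2 → E2 := fun x => WithLp.toLp 2 ![ff (x 1), Real.sqrt 2 * ff (x 0)]

def Lmap (x : E2) : E2 →L[ℝ] E2 :=
  (EuclideanSpace.equiv (Fin 2) ℝ).symm.toContinuousLinearMap.comp
    (ContinuousLinearMap.pi
      ![ff' (x 1) • (EuclideanSpace.proj (1 : Fin 2) : E2 →L[ℝ] ℝ),
        (Real.sqrt 2 * ff' (x 0)) • (EuclideanSpace.proj (0 : Fin 2) : E2 →L[ℝ] ℝ)])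

lemma Lmap_apply (x h : E2) (i : Fin 2) :
    Lmap x h i = ![ff' (x 1) * h 1, Real.sqrt 2 * ff' (x 0) * h 0] i := by
  fin_cases i <;> simp [Lmap]

lemma coord_contDiff (i : Fin 2) : ContDiff ℝ (⊤ : ℕ∞) (fun x : E2 => x i) :=
  (EuclideanSpace.proj i : E2 →L[ℝ] ℝ).contDiff

lemma contDiff_vv : ContDiff ℝ (⊤ : ℕ∞) vv := by
  rw [contDiff_euclidean]
  intro i
  fin_cases i
  · simpa [vv, Function.comp_def] using contDiff_ff.comp (coord_contDiff 1)
  · simpa [vv] using contDiff_const.mul (contDiff_ff.comp (coord_contDiff 0))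

lemma hasFDerivAt_vv (x : E2) : HasFDerivAt vv (Lmap x) x := by
  have hp1 : HasFDerivAt (fun x : E2 => x 1)
      (EuclideanSpace.proj (1 : Fin 2) : E2 →L[ℝ] ℝ) x :=
    (EuclideanSpace.proj (1 : Fin 2) : E2 →L[ℝ] ℝ).hasFDerivAt
  have hp0 : HasFDerivAt (fun x : E2 => x 0)
      (EuclideanSpace.proj (0 : Fin 2) : E2 →L[ℝ] ℝ) x :=
    (EuclideanSpace.proj (0 : Fin 2) : E2 →L[ℝ] ℝ).hasFDerivAt
  have h0 : HasFDerivAt (fun x : E2 => ff (x 1))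
      (ff' (x 1) • (EuclideanSpace.proj (1 : Fin 2) : E2 →L[ℝ] ℝ)) x :=
    by have := (hasDerivAt_ff (x 1)).comp_hasFDerivAt x hp1; exact this
  have h1 : HasFDerivAt (fun x : E2 => Real.sqrt 2 * ff (x 0))
      ((Real.sqrt 2 * ff' (x 0)) • (EuclideanSpace.proj (0 : Fin 2) : E2 →L[ℝ] ℝ)) x := by
    have := ((hasDerivAt_ff (x 0)).comp_hasFDerivAt x hp0).const_mul (Real.sqrt 2)
    rw [← smul_smul]; exact this
  have hw : HasFDerivAt (fun x : E2 => (![ff (x 1), Real.sqrt 2 * ff (x 0)] : Fin 2 → ℝ))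
      (ContinuousLinearMap.pi
        ![ff' (x 1) • (EuclideanSpace.proj (1 : Fin 2) : E2 →L[ℝ] ℝ),
          (Real.sqrt 2 * ff' (x 0)) • (EuclideanSpace.proj (0 : Fin 2) : E2 →L[ℝ] ℝ)]) x := by
    rw [hasFDerivAt_pi']
    intro i
    fin_cases i
    · simpa using h0
    · simpa using h1
  exact ((EuclideanSpace.equiv (Fin 2) ℝ).symm.toContinuousLinearMap.hasFDerivAt.comp x hw :)

lemma trace_Lmap (x : E2) : LinearMap.trace ℝ E2 ((Lmap x) : E2 →ₗ[ℝ] E2) = 0 := by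
  rw [LinearMap.trace_eq_matrix_trace ℝ (EuclideanSpace.basisFun (Fin 2) ℝ).toBasis]
  rw [Matrix.trace]
  simp [Matrix.diag, LinearMap.toMatrix_apply, Fin.sum_univ_two, Lmap,
    EuclideanSpace.basisFun_apply]

lemma norm_Lmap_le (x : E2) : ‖Lmap x‖ ≤ 7 := by
  apply ContinuousLinearMap.opNorm_le_bound _ (by norm_num)
  intro h
  have hπ : π ≤ 4 := Real.pi_le_four
  have hπ0 : 0 < π := Real.pi_pos
  have ha : |ff' (x 1)| ≤ π := abs_ff'_le _
  have hb : |ff' (x 0)| ≤ π := abs_ff'_le _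
  have hs2 : Real.sqrt 2 ≤ 2 := by
    nlinarith [Real.sq_sqrt (by norm_num : (0:ℝ) ≤ 2), Real.sqrt_nonneg 2]
  have hs2' : (0:ℝ) ≤ Real.sqrt 2 := Real.sqrt_nonneg 2
  rw [EuclideanSpace.norm_eq, EuclideanSpace.norm_eq]
  simp only [Fin.sum_univ_two, Lmap_apply, Real.norm_eq_abs, sq_abs]
  rw [show (![ff' (x 1) * h 1, Real.sqrt 2 * ff' (x 0) * h 0] : Fin 2 → ℝ) 0
        = ff' (x 1) * h 1 from rfl,
      show (![ff' (x 1) * h 1, Real.sqrt 2 * ff' (x 0) * h 0] : Fin 2 → ℝ) 1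
        = Real.sqrt 2 * ff' (x 0) * h 0 from rfl]
  rw [show (7:ℝ) * Real.sqrt (h 0 ^ 2 + h 1 ^ 2) = Real.sqrt (49 * (h 0 ^ 2 + h 1 ^ 2)) by
    rw [show (49:ℝ) * (h 0 ^ 2 + h 1 ^ 2) = 7 ^ 2 * (h 0 ^ 2 + h 1 ^ 2) by norm_num,
      Real.sqrt_mul (by positivity), Real.sqrt_sq (by norm_num)]]
  apply Real.sqrt_le_sqrt
  have h1 : (ff' (x 1) * h 1) ^ 2 ≤ 16 * h 1 ^ 2 := by
    have : ff' (x 1) ^ 2 ≤ 16 := by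
      have := sq_abs (ff' (x 1)); nlinarith [abs_nonneg (ff' (x 1))]
    nlinarith [sq_nonneg (h 1)]
  have h2 : (Real.sqrt 2 * ff' (x 0) * h 0) ^ 2 ≤ 32 * h 0 ^ 2 := by
    have hf2 : ff' (x 0) ^ 2 ≤ 16 := by
      have := sq_abs (ff' (x 0)); nlinarith [abs_nonneg (ff' (x 0))]
    have hsq : Real.sqrt 2 ^ 2 = 2 := Real.sq_sqrt (by norm_num)
    nlinarith [sq_nonneg (h 0), sq_nonneg (ff' (x 0) * h 0)]
  nlinarith [sq_nonneg (h 0), sq_nonneg (h 1)]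

lemma lipschitz_vv : LipschitzWith 7 vv := by
  apply lipschitzWith_of_nnnorm_fderiv_le (contDiff_vv.differentiable (by simp))
  intro x
  rw [(hasFDerivAt_vv x).fderiv]
  rw [← NNReal.coe_le_coe, coe_nnnorm]
  exact_mod_cast norm_Lmap_le x

lemma vv_zero_iff (p : E2) : vv p = 0 ↔ (∃ k : ℤ, p 0 = (k:ℝ)) ∧ ∃ k : ℤ, p 1 = (k:ℝ) := by
  constructor
  · intro hp
    have h0 : ff (p 1) = 0 := congrFun (congrArg WithLp.ofLp hp) 0
    have h1 : Real.sqrt 2 * ff (p 0) = 0 := congrFun (congrArg WithLp.ofLp hp) 1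
    have hs : Real.sqrt 2 ≠ 0 := by positivity
    rw [mul_eq_zero] at h1
    rcases h1 with h1 | h1
    · exact absurd h1 hs
    · exact ⟨(ff_eq_zero_iff _).1 h1, (ff_eq_zero_iff _).1 h0⟩
  · rintro ⟨⟨k0, h0⟩, ⟨k1, h1⟩⟩
    ext i
    fin_cases i
    · show ff (p 1) = 0
      rw [(ff_eq_zero_iff _)]; exact ⟨k1, h1⟩
    · show Real.sqrt 2 * ff (p 0) = 0
      rw [(ff_eq_zero_iff (p 0)).2 ⟨k0, h0⟩, mul_zero]

end SympTorus

open SympTorus in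
/-- There exists a symplectic (i.e. divergence-free) vector field on the torus
`𝕋² = ℝ²/ℤ²` with exactly one zero modulo `ℤ²` and no non-constant periodic orbits. -/
theorem exists_symplectic_vector_field_torus_one_zero_no_periodic_orbits :
    ∃ v : E2 → E2, ContDiff ℝ (⊤ : ℕ∞) v ∧
      -- `v` is `ℤ²`-periodic
      (∀ x m : E2, IsLat m → v (x + m) = v x) ∧
      -- `v` is divergence-free
      (∀ x : E2, LinearMap.trace ℝ E2 (fderiv ℝ v x : E2 →ₗ[ℝ] E2) = 0) ∧
      -- `v` has exactly one zero modulo `ℤ²`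
      (∃ x₀ : E2, v x₀ = 0 ∧ ∀ x : E2, v x = 0 → IsLat (x - x₀)) ∧
      -- the flow of `v` has no non-constant periodic orbits on `𝕋²`
      ¬ ∃ x : ℝ → E2, (∀ t : ℝ, HasDerivAt x (v (x t)) t) ∧
          (∃ t s : ℝ, x t ≠ x s) ∧
          ∃ T : ℝ, 0 < T ∧ IsLat (x T - x 0) := by
  refine ⟨vv, contDiff_vv, ?_, ?_, ?_, ?_⟩
  · -- periodicity
    intro x m hm
    obtain ⟨k0, hk0⟩ := hm 0
    obtain ⟨k1, hk1⟩ := hm 1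
    ext i
    fin_cases i
    · show ff ((x + m) 1) = ff (x 1)
      have : (x + m) 1 = x 1 + (k1 : ℝ) := by
        show x 1 + m 1 = _
        rw [hk1]
      rw [this, ff_int_add]
    · show Real.sqrt 2 * ff ((x + m) 0) = Real.sqrt 2 * ff (x 0)
      have : (x + m) 0 = x 0 + (k0 : ℝ) := by
        show x 0 + m 0 = _
        rw [hk0]
      rw [this, ff_int_add]
  · -- divergence-free
    intro x
    rw [(hasFDerivAt_vv x).fderiv]
    exact trace_Lmap x
  · -- unique zero
    refine ⟨0, ?_, ?_⟩
    · rw [vv_zero_iff]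
      exact ⟨⟨0, by norm_num⟩, ⟨0, by norm_num⟩⟩
    · intro x hx
      rw [vv_zero_iff] at hx
      intro i
      have : (x - 0) i = x i := by rw [sub_zero]
      rw [this]
      fin_cases i
      · exact hx.1
      · exact hx.2
  · -- no periodic orbits
    rintro ⟨x, hx, ⟨t1, t2, hne⟩, T, hT, hlat⟩
    -- coordinates
    set X0 : ℝ → ℝ := fun t => x t 0 with hX0def
    set X1 : ℝ → ℝ := fun t => x t 1 with hX1def
    have hD0 : ∀ t, HasDerivAt X0 (ff (X1 t)) t := by
      intro t
      have := (EuclideanSpace.proj (0 : Fin 2) : E2 →L[ℝ] ℝ).hasFDerivAt.comp_hasDerivAt t (hx t)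
      exact this
    have hD1 : ∀ t, HasDerivAt X1 (Real.sqrt 2 * ff (X0 t)) t := by
      intro t
      have := (EuclideanSpace.proj (1 : Fin 2) : E2 →L[ℝ] ℝ).hasFDerivAt.comp_hasDerivAt t (hx t)
      exact this
    -- monotone
    have hm0 : Monotone X0 := by
      apply monotone_of_deriv_nonneg
      · exact fun t => (hD0 t).differentiableAt
      · intro t; rw [(hD0 t).deriv]; exact ff_nonneg _
    have hm1 : Monotone X1 := by
      apply monotone_of_deriv_nonneg
      · exact fun t => (hD1 t).differentiableAt
      · intro t; rw [(hD1 t).deriv]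
        exact mul_nonneg (Real.sqrt_nonneg 2) (ff_nonneg _)
    -- conserved quantity
    set Q : ℝ → ℝ := fun t => Real.sqrt 2 * GG (X0 t) - GG (X1 t) with hQdef
    have hQ' : ∀ t, HasDerivAt Q 0 t := by
      intro t
      have h0 := ((hasDerivAt_GG (X0 t)).comp t (hD0 t)).const_mul (Real.sqrt 2)
      have h1 := (hasDerivAt_GG (X1 t)).comp t (hD1 t)
      have := h0.sub h1
      convert this using 1
      iterate 3 rfl
      ring
    have hQconst : Q T = Q 0 := by
      apply is_const_of_deriv_eq_zero
      · exact fun t => (hQ' t).differentiableAt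
      · intro t; exact (hQ' t).deriv
    -- lattice displacement
    obtain ⟨m, hmval⟩ := hlat 0
    obtain ⟨n, hnval⟩ := hlat 1
    have hmv : X0 T = X0 0 + (m : ℝ) := by
      have : x T 0 - x 0 0 = (m : ℝ) := hmval
      simp only [hX0def]; linarith
    have hnv : X1 T = X1 0 + (n : ℝ) := by
      have : x T 1 - x 0 1 = (n : ℝ) := hnval
      simp only [hX1def]; linarith
    have hQT : Real.sqrt 2 * (m : ℝ) = (n : ℝ) := by
      have e0 : GG (X0 T) = GG (X0 0) + m / 2 := by rw [hmv, GG_int_add]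
      have e1 : GG (X1 T) = GG (X1 0) + n / 2 := by rw [hnv, GG_int_add]
      have := hQconst
      rw [hQdef] at this
      simp only [e0, e1] at this
      nlinarith [this]
    have hm0' : m = 0 := by
      by_contra hmne
      have hmne' : (m : ℝ) ≠ 0 := Int.cast_ne_zero.2 hmne
      have : (Real.sqrt 2 : ℝ) = (n : ℝ) / (m : ℝ) := by
        field_simp at hQT ⊢; linarith [hQT]
      have : (Real.sqrt 2 : ℝ) = ((n / m : ℚ) : ℝ) := by
        rw [this]; push_cast; ring
      exact irrational_sqrt_two ⟨(n / m : ℚ), this.symm⟩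
    have hn0 : (n : ℝ) = 0 := by rw [← hQT, hm0']; norm_num
    -- x T = x 0
    have hxT : x T = x 0 := by
      ext i
      fin_cases i
      · show X0 T = X0 0
        rw [hmv, hm0']; norm_num
      · show X1 T = X1 0
        rw [hnv, hn0]; norm_num
    -- x constant on [0, T]
    have hconst : ∀ t ∈ Set.Icc (0:ℝ) T, x t = x 0 := by
      intro t ht
      ext i
      fin_cases i
      · show X0 t = X0 0
        have h1 : X0 0 ≤ X0 t := hm0 ht.1
        have h2 : X0 t ≤ X0 T := hm0 ht.2
        have : X0 T = X0 0 := congrFun (congrArg WithLp.ofLp hxT) 0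
        linarith
      · show X1 t = X1 0
        have h1 : X1 0 ≤ X1 t := hm1 ht.1
        have h2 : X1 t ≤ X1 T := hm1 ht.2
        have : X1 T = X1 0 := congrFun (congrArg WithLp.ofLp hxT) 1
        linarith
    -- v (x 0) = 0
    have hmid : (T/2 : ℝ) ∈ Set.Ioo (0:ℝ) T := ⟨by linarith, by linarith⟩
    have hev : x =ᶠ[nhds (T/2)] fun _ => x 0 := by
      have : Set.Ioo (0:ℝ) T ∈ nhds (T/2) := isOpen_Ioo.mem_nhds hmid
      filter_upwards [this] with t ht
      exact hconst t (Set.Ioo_subset_Icc_self ht)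
    have hd0 : HasDerivAt x (0 : E2) (T/2) := by
      have hc : HasDerivAt (fun _ : ℝ => x 0) (0 : E2) (T/2) := hasDerivAt_const _ _
      exact hc.congr_of_eventuallyEq hev
    have hvz : vv (x (T/2)) = 0 := (hx (T/2)).unique hd0
    have hx0 : x (T/2) = x 0 := hconst (T/2) (Set.Ioo_subset_Icc_self hmid)
    rw [hx0] at hvz
    -- uniqueness: x is constant everywhere
    have huniq : ∀ t : ℝ, x t = x 0 := by
      intro t
      rcases eq_or_ne t (T/2) with rfl | htne
      · exact hx0
      have hK : ∀ s : ℝ, LipschitzOnWith 7 vv Set.univ :=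
        fun _ => lipschitz_vv.lipschitzOnWith
      set a : ℝ := min t (T/2) - 1
      set b : ℝ := max t (T/2) + 1
      have hab : T/2 ∈ Set.Ioo a b :=
        ⟨by simp only [a]; have := min_le_right t (T/2); linarith,
         by simp only [b]; have := le_max_right t (T/2); linarith⟩
      have htab : t ∈ Set.Ioo a b :=
        ⟨by simp only [a]; have := min_le_left t (T/2); linarith,
         by simp only [b]; have := le_max_left t (T/2); linarith⟩
      have := ODE_solution_unique_of_mem_Ioo (v := fun _ => vv) (s := fun _ => Set.univ)
        (fun s _ => hK s) hab
        (f := x) (g := fun _ => x 0)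
        (fun s _ => ⟨hx s, Set.mem_univ _⟩)
        (fun s _ => ⟨by simpa [hvz] using (hasDerivAt_const s (x 0)), Set.mem_univ _⟩)
        hx0
      exact this htab
    exact hne (by rw [huniq t1, huniq t2])
end
end
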